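/- arXiv:2107.03157 — 7 statements merged into one kernel-verified Lean document; each statement's English description precedes it below -/
import Mathlib

section
/- An $[n,k]$ Gabidulin code over $\mathbb{F}_{q^m}$ has minimum rank distance $n-k+1$, i.e., every nonzero codeword has rank weight at least $n-k+1$. -/
/-- An `[n,k]` Gabidulin code over `𝔽_{q^m}` (with `k ≤ n ≤ m`) has minimum rank
distance `n - k + 1`: every nonzero codeword has rank weight at least `n - k + 1`. -/
theorem gabidulin_min_rank_distance
    (q m n k : ℕ) (Fq Fqm : Type) [Field Fq] [Fintype Fq] [Field Fqm] [Algebra Fq Fqm]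
    (hq : Fintype.card Fq = q) (hm : Module.finrank Fq Fqm = m)
    (hk : 0 < k) (hkn : k ≤ n) (hnm : n ≤ m)
    (g : Fin n → Fqm) (hg : LinearIndependent Fq g)
    (c : Fin n → Fqm)
    (hc : c ∈ Submodule.span Fqm
      (Set.range fun i : Fin k => fun j : Fin n => g j ^ q ^ (i : ℕ)))
    (hc0 : c ≠ 0) :
    n - k + 1 ≤ Module.finrank Fq (Submodule.span Fq (Set.range c)) := by
  classical
  -- basic facts about q
  have hq2 : 1 < q := hq ▸ Fintype.one_lt_card
  -- characteristic setup
  set p := ringChar Fq with hpdef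
  haveI hpF : Fact p.Prime := ⟨CharP.char_is_prime Fq p⟩
  haveI : CharP Fq p := ringChar.charP Fq
  haveI : CharP Fqm p := charP_of_injective_algebraMap (algebraMap Fq Fqm).injective p
  obtain ⟨s, hps, hqs⟩ := FiniteField.card Fq p
  rw [hq] at hqs
  -- Fqm is finite dimensional over Fq, hence finite
  haveI : FiniteDimensional Fq Fqm := by
    refine FiniteDimensional.of_finrank_pos ?_
    rw [hm]; omega
  haveI : Finite Fqm := Module.finite_of_finite Fq
  haveI : Fintype Fqm := Fintype.ofFinite Fqm
  -- representation of c
  rw [Submodule.mem_span_range_iff_exists_fun] at hc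
  obtain ⟨a, ha⟩ := hc
  have hrep : ∀ j, c j = ∑ i, a i * g j ^ q ^ (i : ℕ) := by
    intro j; rw [← ha]; simp [Finset.sum_apply]
  have ha0 : a ≠ 0 := by
    rintro rfl
    apply hc0
    funext j
    rw [hrep j]; simp
  -- frobenius-type identities
  have hadd : ∀ (x y : Fqm) (i : ℕ), (x + y) ^ q ^ i = x ^ q ^ i + y ^ q ^ i := by
    intro x y i
    rw [hqs, ← pow_mul]
    apply add_pow_char_pow
  have hsmul : ∀ (l : Fq) (x : Fqm) (i : ℕ),
      (l • x) ^ q ^ i = l • (x ^ q ^ i) := by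
    intro l x i
    rw [Algebra.smul_def, Algebra.smul_def, mul_pow, ← map_pow]
    congr 2
    rw [← hq]
    exact FiniteField.pow_card_pow i l
  -- the linearized polynomial as an Fq-linear map
  set φ : Fqm →ₗ[Fq] Fqm :=
    { toFun := fun x => ∑ i : Fin k, a i * x ^ q ^ (i : ℕ)
      map_add' := by
        intro x y
        show (∑ i : Fin k, a i * (x + y) ^ q ^ (i : ℕ)) =
          (∑ i : Fin k, a i * x ^ q ^ (i : ℕ)) + ∑ i : Fin k, a i * y ^ q ^ (i : ℕ)
        rw [← Finset.sum_add_distrib]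
        refine Finset.sum_congr rfl fun i _ => ?_
        rw [hadd, mul_add]
      map_smul' := by
        intro l x
        show (∑ i : Fin k, a i * (l • x) ^ q ^ (i : ℕ)) =
          (RingHom.id Fq) l • ∑ i : Fin k, a i * x ^ q ^ (i : ℕ)
        rw [RingHom.id_apply, Finset.smul_sum]
        refine Finset.sum_congr rfl fun i _ => ?_
        rw [hsmul, mul_smul_comm] } with hφdef
  have hφ : ∀ x, φ x = ∑ i : Fin k, a i * x ^ q ^ (i : ℕ) := fun _ => rfl
  -- the associated polynomial
  set P : Polynomial Fqm := ∑ i : Fin k, Polynomial.C (a i) * Polynomial.X ^ q ^ (i : ℕ)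
    with hPdef
  have hPeval : ∀ x : Fqm, P.eval x = φ x := by
    intro x; rw [hφ, hPdef]; simp [Polynomial.eval_finset_sum]
  have hqpow_injOn : ∀ i j : Fin k, q ^ (i : ℕ) = q ^ (j : ℕ) → i = j := by
    intro i j hij
    exact Fin.ext (Nat.pow_right_injective hq2 hij)
  have hPcoeff : ∀ i : Fin k, P.coeff (q ^ (i : ℕ)) = a i := by
    intro i
    rw [hPdef, Polynomial.finset_sum_coeff]
    rw [Finset.sum_eq_single i]
    · simp
    · intro j _ hji
      rw [Polynomial.coeff_C_mul, Polynomial.coeff_X_pow, if_neg, mul_zero]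
      exact fun h => hji (hqpow_injOn j i h.symm)
    · simp
  have hP0 : P ≠ 0 := by
    obtain ⟨i, hi⟩ := Function.ne_iff.mp ha0
    simp only [Pi.zero_apply] at hi
    intro h
    apply hi
    rw [← hPcoeff i, h, Polynomial.coeff_zero]
  have hPdeg : P.natDegree ≤ q ^ (k - 1) := by
    rw [hPdef]
    refine (Polynomial.natDegree_sum_le _ _).trans ?_
    rw [Finset.fold_max_le]
    constructor
    · positivity
    · intro i _
      refine (Polynomial.natDegree_C_mul_le _ _).trans ?_
      refine (Polynomial.natDegree_X_pow_le _).trans ?_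
      exact Nat.pow_le_pow_right (by omega) (by omega)
  -- kernel of φ has small dimension
  have hkercard : Fintype.card (LinearMap.ker φ) ≤ q ^ (k - 1) := by
    have hroots : ∀ x : Fqm, x ∈ LinearMap.ker φ → x ∈ P.roots.toFinset := by
      intro x hx
      rw [Multiset.mem_toFinset, Polynomial.mem_roots hP0, Polynomial.IsRoot, hPeval]
      exact hx
    calc Fintype.card (LinearMap.ker φ)
        ≤ Fintype.card {x // x ∈ P.roots.toFinset} := by
          refine Fintype.card_le_of_injective
            (fun x => ⟨x.1, hroots x.1 x.2⟩) ?_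
          intro x y hxy
          simp only [Subtype.mk.injEq] at hxy
          exact Subtype.ext hxy
      _ = P.roots.toFinset.card := Fintype.card_coe _
      _ ≤ Multiset.card P.roots := P.roots.toFinset_card_le
      _ ≤ P.natDegree := Polynomial.card_roots' P
      _ ≤ q ^ (k - 1) := hPdeg
  have hkerdim : Module.finrank Fq (LinearMap.ker φ) ≤ k - 1 := by
    have := Module.card_eq_pow_finrank (K := Fq) (V := LinearMap.ker φ)
    rw [hq] at this
    rw [this] at hkercard
    exact (Nat.pow_le_pow_iff_right hq2).mp hkercard
  -- the span of g and restriction of φ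
  set V : Submodule Fq Fqm := Submodule.span Fq (Set.range g) with hVdef
  have hVrank : Module.finrank Fq V = n := by
    rw [hVdef, finrank_span_eq_card hg, Fintype.card_fin]
  set ψ : V →ₗ[Fq] Fqm := φ.comp V.subtype with hψdef
  have hrange : LinearMap.range ψ = Submodule.span Fq (Set.range c) := by
    rw [hψdef, LinearMap.range_comp, Submodule.range_subtype, hVdef,
      Submodule.map_span]
    rw [← Set.range_comp]
    have hcg : φ ∘ g = c := by
      funext j
      rw [Function.comp_apply, hφ]
      exact (hrep j).symm
    rw [hcg]
  have hkerψ : Module.finrank Fq (LinearMap.ker ψ) ≤ k - 1 := by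
    refine le_trans ?_ hkerdim
    have hmap : (LinearMap.ker ψ).map V.subtype ≤ LinearMap.ker φ := by
      rintro x ⟨y, hy, rfl⟩
      exact hy
    calc Module.finrank Fq (LinearMap.ker ψ)
        = Module.finrank Fq ((LinearMap.ker ψ).map V.subtype) :=
          (Submodule.finrank_map_subtype_eq V _).symm
      _ ≤ Module.finrank Fq (LinearMap.ker φ) := Submodule.finrank_mono hmap
  have hrn := LinearMap.finrank_range_add_finrank_ker ψ
  rw [hVrank, hrange] at hrn
  omega
end

section
/- Let $\bm{a}=(\alpha_1,\ldots,\alpha_m)$ be a basis vector of $\mathbb{F}_{q^m}$ over $\mathbb{F}_q$ and $\varphi$ an $\mathbb{F}_q$-linear automorphism of $\mathbb{F}_{q^m}$. Let $A$ be the $m\times m$ matrix over $\mathbb{F}_{q^m}$ whose $i$-th row is $\varphi(\alpha_i\bm{a}) = (\varphi(\alpha_i\alpha_1),\ldots,\varphi(\alpha_i\alpha_m))$. Then $\varphi$ maps every $\mathbb{F}_{q^m}$-linear subspace of $\mathbb{F}_{q^m}^n$ (for every $n$) to an $\mathbb{F}_{q^m}$-linear subspace if and only if $A$ has rank $1$ over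 $\mathbb{F}_{q^m}$. -/
/-!
Full linearity amounts to a factorisation `φ (x * y) = f x * g y`. Testing full linearity on
the line spanned by `(y, 1)` in `L²` gives `φ (x * y) = φ x * φ (φ⁻¹ 1 * y)`; conversely such a
factorisation carries multiplication by any `t` through `φ`, as `t * φ x = φ (d * x)` for a
suitable `d`, so images of `L`-subspaces are `L`-subspaces. By bilinearity of `(x, y) ↦ φ (x * y)`
over `K`, a factorisation exists exactly when the matrix `(φ (αᵢ * αⱼ))` is an outer product
`w vᵀ`, and since that matrix is nonzero this means it has rank one.
-/

/-- An `𝔽_q`-linear automorphism `φ` of `𝔽_{q^m}` is *fully linear* if for every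
`n`, the componentwise image of every `𝔽_{q^m}`-linear code in `𝔽_{q^m}ⁿ` is
again `𝔽_{q^m}`-linear. -/
def FullyLinear (Fq Fqm : Type) [Field Fq] [Field Fqm] [Algebra Fq Fqm]
    (φ : Fqm ≃ₗ[Fq] Fqm) : Prop :=
  ∀ (n : ℕ) (C : Submodule Fqm (Fin n → Fqm)),
    ∃ D : Submodule Fqm (Fin n → Fqm),
      (fun v : Fin n → Fqm => fun i => φ (v i)) '' (C : Set (Fin n → Fqm)) = D

namespace Matrix

variable {m n R : Type*} [Field R] [Finite m] [Fintype n]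

theorem rank_eq_zero_iff {A : Matrix m n R} : A.rank = 0 ↔ A = 0 := by
  rw [rank_eq_finrank_span_row, Submodule.finrank_eq_zero, Submodule.span_eq_bot,
    Set.forall_mem_range]
  exact funext_iff.symm

theorem exists_vecMulVec_eq_of_rank_le_one {A : Matrix m n R} (h : A.rank ≤ 1) :
    ∃ w : m → R, ∃ v : n → R, vecMulVec w v = A := by
  rw [rank_eq_finrank_span_row, finrank_le_one_iff] at h
  obtain ⟨v, hv⟩ := h
  have hrow (i : m) : ∃ c : R, c • (v : n → R) = A i := by
    obtain ⟨c, hc⟩ := hv ⟨A i, Submodule.subset_span ⟨i, rfl⟩⟩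
    exact ⟨c, congrArg Subtype.val hc⟩
  choose w hw using hrow
  exact ⟨w, v, by ext i j; simp [vecMulVec_apply, ← hw i]⟩

theorem rank_eq_one_iff {A : Matrix m n R} :
    A.rank = 1 ↔ A ≠ 0 ∧ ∃ w : m → R, ∃ v : n → R, vecMulVec w v = A := by
  refine ⟨fun h => ⟨?_, exists_vecMulVec_eq_of_rank_le_one h.le⟩, ?_⟩
  · rw [Ne, ← rank_eq_zero_iff]
    omega
  · rintro ⟨hA, w, v, rfl⟩
    refine le_antisymm (rank_vecMulVec_le w v) ?_
    rwa [Nat.one_le_iff_ne_zero, Ne, rank_eq_zero_iff]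

end Matrix

theorem Module.Basis.map_mul_eq_constr_mul_constr {ι K L : Type*} [CommSemiring K]
    [Semiring L] [Algebra K L] (b : Module.Basis ι K L) (φ : L →ₗ[K] L) {w v : ι → L}
    (h : ∀ i j, φ (b i * b j) = w i * v j) (x y : L) :
    φ (x * y) = b.constr K w x * b.constr K v y := by
  have hbilin : (LinearMap.mul K L).compr₂ φ
      = (LinearMap.mul K L).compl₁₂ (b.constr K w) (b.constr K v) :=
    LinearMap.ext_basis b b fun i j => by simp [h]
  exact LinearMap.congr_fun₂ hbilin x y

theorem exists_map_mul_eq_mul_map {L : Type*} [Field L] {φ f g : L → L}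
    (hφ : Function.Surjective φ) (hfg : ∀ x y, φ (x * y) = f x * g y) (t : L) :
    ∃ d, ∀ x, φ (d * x) = t * φ x := by
  have hg : g 1 ≠ 0 := by
    obtain ⟨z, hz⟩ := hφ 1
    intro h0
    simpa [h0, hz] using hfg z 1
  obtain ⟨d, hd⟩ := hφ (t * φ 1)
  have hfd : f d = t * f 1 := by
    apply mul_right_cancel₀ hg
    rw [← hfg, mul_one, hd, mul_assoc, ← hfg, mul_one]
  refine ⟨d, fun x => ?_⟩
  rw [hfg, hfd, mul_assoc, ← hfg, one_mul]

section FullyLinear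

variable {K L : Type} [Field K] [Field L] [Algebra K L] {φ : L ≃ₗ[K] L}

theorem FullyLinear.map_mul (h : FullyLinear K L φ) (x y : L) :
    φ (x * y) = φ x * φ (φ.symm 1 * y) := by
  obtain ⟨D, hD⟩ := h 2 (L ∙ ![y, 1])
  have hmem : φ x • ![φ (φ.symm 1 * y), 1] ∈ D := by
    refine D.smul_mem _ ?_
    rw [← SetLike.mem_coe, ← hD]
    refine ⟨φ.symm 1 • ![y, 1], Submodule.smul_mem _ _ (Submodule.mem_span_singleton_self _), ?_⟩
    ext i
    fin_cases i <;> simp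
  rw [← SetLike.mem_coe, ← hD] at hmem
  obtain ⟨_, hc, hcx⟩ := hmem
  obtain ⟨c, rfl⟩ := Submodule.mem_span_singleton.mp hc
  have hφc : φ c = φ x := by simpa using congrFun hcx 1
  simpa [φ.injective hφc] using congrFun hcx 0

theorem fullyLinear_of_exists_map_mul_eq_mul_map
    (h : ∀ t, ∃ d, ∀ x, φ (d * x) = t * φ x) : FullyLinear K L φ := by
  intro n C
  refine ⟨{ carrier := (fun v : Fin n → L => fun i => φ (v i)) '' (C : Set (Fin n → L)),
            add_mem' := ?_, zero_mem' := ?_, smul_mem' := ?_ }, rfl⟩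
  · rintro _ _ ⟨u, hu, rfl⟩ ⟨v, hv, rfl⟩
    exact ⟨u + v, C.add_mem hu hv, by ext; simp⟩
  · exact ⟨0, C.zero_mem, by ext; simp⟩
  · rintro t _ ⟨v, hv, rfl⟩
    obtain ⟨d, hd⟩ := h t
    exact ⟨d • v, C.smul_mem d hv, by ext; simp [hd]⟩

end FullyLinear

theorem fullyLinear_iff_rank_one_general
    (Fq Fqm : Type) [Field Fq] [Field Fqm] [Algebra Fq Fqm]
    (m : ℕ) (b : Module.Basis (Fin m) Fq Fqm) (φ : Fqm ≃ₗ[Fq] Fqm) :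
    FullyLinear Fq Fqm φ ↔
      (Matrix.of fun i j : Fin m => φ (b i * b j)).rank = 1 := by
  have hA : (Matrix.of fun i j : Fin m => φ (b i * b j)) ≠ 0 := fun h0 => by
    obtain ⟨i⟩ := b.index_nonempty
    simpa [b.ne_zero i] using congr_fun₂ h0 i i
  rw [Matrix.rank_eq_one_iff]
  constructor
  · intro h
    refine ⟨hA, φ ∘ b, fun j => φ (φ.symm 1 * b j), ?_⟩
    ext i j
    exact (h.map_mul (b i) (b j)).symm
  · rintro ⟨-, w, v, hwv⟩
    have hfg := b.map_mul_eq_constr_mul_constr φ.toLinearMap fun i j => (congr_fun₂ hwv i j).symm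
    exact fullyLinear_of_exists_map_mul_eq_mul_map (exists_map_mul_eq_mul_map φ.surjective hfg)

/-- Let `a = (α_1, …, α_m)` be a basis of `𝔽_{q^m}` over `𝔽_q`, `φ` an
`𝔽_q`-linear automorphism of `𝔽_{q^m}`, and `A` the `m × m` matrix whose
`(i,j)` entry is `φ(α_i α_j)`.  Then `φ` is fully linear if and only if `A` has
rank `1`. -/
theorem fullyLinear_iff_rank_one
    (Fq Fqm : Type) [Field Fq] [Fintype Fq] [Field Fqm] [Algebra Fq Fqm]
    (m : ℕ) (hm : 0 < m) (b : Module.Basis (Fin m) Fq Fqm) (φ : Fqm ≃ₗ[Fq] Fqm) :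
    FullyLinear Fq Fqm φ ↔
      (Matrix.of fun i j : Fin m => φ (b i * b j)).rank = 1 :=
  fullyLinear_iff_rank_one_general Fq Fqm m b φ
end

section
/- The total number of fully linear transformations over $\mathbb{F}_{q^m}$, i.e., $\mathbb{F}_q$-linear automorphisms $\varphi$ of $\mathbb{F}_{q^m}$ such that $\varphi(\mathcal{C})$ is $\mathbb{F}_{q^m}$-linear for every $\mathbb{F}_{q^m}$-linear code $\mathcal{C}$, is exactly $m(q^m - 1)$. -/
variable {K L : Type} [Field K] [Field L] [Algebra K L]

def unitMulAut (c : Lˣ) (σ : L ≃ₐ[K] L) : L ≃ₗ[K] L :=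
  σ.toLinearEquiv.trans (DistribMulAction.toLinearEquiv K L c)

@[simp]
theorem unitMulAut_apply (c : Lˣ) (σ : L ≃ₐ[K] L) (x : L) : unitMulAut c σ x = c * σ x :=
  rfl

theorem fullyLinear_unitMulAut (c : Lˣ) (σ : L ≃ₐ[K] L) : FullyLinear K L (unitMulAut c σ) := by
  intro n C
  have : RingHomSurjective (σ : L →+* L) := ⟨σ.surjective⟩
  let f : (Fin n → L) →ₛₗ[(σ : L →+* L)] (Fin n → L) :=
    { toFun := fun v i => c * σ (v i)
      map_add' := fun u v => funext fun i => by simp [mul_add]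
      map_smul' := fun a v => funext fun i => by
        simp only [Pi.smul_apply, smul_eq_mul, map_mul, RingHom.coe_coe]
        ring }
  exact ⟨C.map f, (Submodule.map_coe f C).symm⟩

theorem LinearEquiv.map_one_ne_zero {R A : Type*} [Semiring R] [Semiring A] [Nontrivial A]
    [Module R A] (φ : A ≃ₗ[R] A) : φ 1 ≠ 0 :=
  φ.map_ne_zero_iff.mpr one_ne_zero

namespace FullyLinear

variable {φ : L ≃ₗ[K] L}

theorem map_one_mul_map_mul (h : FullyLinear K L φ) (x y : L) :
    φ 1 * φ (x * y) = φ x * φ y := by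
  obtain ⟨D, hD⟩ := h 2 (Submodule.span L {![1, y]})
  have hw : (fun i => φ (![1, y] i)) ∈ (D : Set (Fin 2 → L)) :=
    hD ▸ ⟨_, Submodule.mem_span_singleton_self _, rfl⟩
  -- The scaled image vector `(φ x, φ x / φ 1 * φ y)` is again an image `φ (a • (1, y))`.
  have hscaled := D.smul_mem (φ x / φ 1) hw
  rw [← SetLike.mem_coe, ← hD] at hscaled
  obtain ⟨u, hu, hu_eq⟩ := hscaled
  obtain ⟨a, rfl⟩ := Submodule.mem_span_singleton.mp hu
  have hfirst : φ a = φ x := by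
    simpa [φ.map_one_ne_zero] using congrFun hu_eq 0
  have hsecond : φ (a * y) = φ x / φ 1 * φ y := by simpa using congrFun hu_eq 1
  rw [φ.injective hfirst] at hsecond
  rw [hsecond]
  field_simp [φ.map_one_ne_zero]

def algEquiv (h : FullyLinear K L φ) : L ≃ₐ[K] L :=
  AlgEquiv.ofLinearEquiv
    (φ.trans (DistribMulAction.toLinearEquiv K L (Units.mk0 (φ 1) φ.map_one_ne_zero)⁻¹))
    (by simp [Units.smul_def, φ.map_one_ne_zero])
    (fun x y => by
      simp only [LinearEquiv.trans_apply, DistribMulAction.toLinearEquiv_apply,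
        Units.smul_def, Units.val_inv_eq_inv_val, Units.val_mk0, smul_eq_mul]
      have key := h.map_one_mul_map_mul x y
      field_simp [φ.map_one_ne_zero]
      linear_combination key)

@[simp]
theorem algEquiv_apply (h : FullyLinear K L φ) (x : L) : h.algEquiv x = (φ 1)⁻¹ * φ x :=
  rfl

end FullyLinear

def fullyLinearEquivUnitsProdAlgEquiv :
    {φ : L ≃ₗ[K] L // FullyLinear K L φ} ≃ Lˣ × (L ≃ₐ[K] L) where
  toFun φ := (Units.mk0 (φ.1 1) φ.1.map_one_ne_zero, φ.2.algEquiv)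
  invFun p := ⟨unitMulAut p.1 p.2, fullyLinear_unitMulAut p.1 p.2⟩
  left_inv φ := Subtype.ext <| LinearEquiv.ext fun x => by
    simp [φ.1.map_one_ne_zero]
  right_inv p := Prod.ext (Units.ext (by simp)) (AlgEquiv.ext fun x => by simp)

/-- The total number of fully linear transformations over `𝔽_{q^m}` is
`m (q^m - 1)`. -/
theorem card_fullyLinear
    (q m : ℕ) (hm : 0 < m) (Fq Fqm : Type) [Field Fq] [Fintype Fq] [Field Fqm]
    [Algebra Fq Fqm] (hq : Fintype.card Fq = q)
    (hrank : Module.finrank Fq Fqm = m) :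
    Nat.card {φ : Fqm ≃ₗ[Fq] Fqm // FullyLinear Fq Fqm φ} = m * (q ^ m - 1) := by
  have : FiniteDimensional Fq Fqm := FiniteDimensional.of_finrank_pos (hrank ▸ hm)
  have : Finite Fqm := Module.finite_of_finite Fq
  let : Fintype Fqm := Fintype.ofFinite Fqm
  have hunits : Nat.card Fqmˣ = q ^ m - 1 := by
    rw [Nat.card_units, Nat.card_eq_fintype_card, Module.card_eq_pow_finrank (K := Fq), hq, hrank]
  rw [Nat.card_congr fullyLinearEquivUnitsProdAlgEquiv, Nat.card_prod, hunits,
    IsGalois.card_aut_eq_finrank, hrank, mul_comm]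
end

section
/- Every fully linear transformation $\varphi$ over $\mathbb{F}_{q^m}$ has the form $\varphi(\mu) = \beta\mu^{q^j}$ for some $\beta\in\mathbb{F}_{q^m}^*$ and some $0\le j\le m-1$; i.e., it is a composition of a Frobenius power and multiplication by a nonzero scalar. Conversely, every such map is fully linear. -/
open Polynomial

/-- Every ring endomorphism of `Fqm` fixing `Fq` pointwise is a power of the
`q`-Frobenius. -/
theorem ringHom_fixing_is_frobenius_pow
    (q m : ℕ) (hm : 0 < m) (Fq Fqm : Type) [Field Fq] [Fintype Fq] [Field Fqm]
    [Algebra Fq Fqm] (hq : Fintype.card Fq = q)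
    (hrank : Module.finrank Fq Fqm = m) (f : Fqm →+* Fqm)
    (hf : ∀ c : Fq, f (algebraMap Fq Fqm c) = algebraMap Fq Fqm c) :
    ∃ j : ℕ, j ≤ m - 1 ∧ ∀ x : Fqm, f x = x ^ q ^ j := by
  haveI : DecidableEq Fqm := Classical.decEq _
  haveI : Module.Finite Fq Fqm :=
    Module.finite_of_finrank_pos (by rw [hrank]; exact hm)
  haveI : Finite Fqm := Module.finite_of_finite Fq
  haveI : Fintype Fqm := Fintype.ofFinite Fqm
  have hq1 : 1 < q := by rw [← hq]; exact Fintype.one_lt_card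
  have hcard : Fintype.card Fqm = q ^ m := by
    rw [Module.card_fintype (Module.finBasis Fq Fqm), hq, Fintype.card_fin, hrank]
  -- characteristic facts
  set p := ringChar Fq with hp
  haveI : CharP Fq p := ringChar.charP Fq
  haveI : CharP Fqm p := charP_of_injective_algebraMap (algebraMap Fq Fqm).injective p
  obtain ⟨e, hpprime, hqe⟩ := FiniteField.card Fq p
  rw [hq] at hqe
  haveI : Fact p.Prime := ⟨hpprime⟩
  -- the q-power Frobenius on Fqm
  have Fhom : Fqm →+* Fqm := iterateFrobenius Fqm p e
  have hFapp : ∀ x : Fqm, (iterateFrobenius Fqm p e) x = x ^ q := by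
    intro x; rw [iterateFrobenius_def, ← hqe]
  have hfixq : ∀ c : Fq, c ^ q = c := by
    intro c; rw [← hq]; exact FiniteField.pow_card c
  have hfixqj : ∀ (c : Fq) (j : ℕ), c ^ q ^ j = c := by
    intro c j
    induction j with
    | zero => simp
    | succ j ih => rw [pow_succ, pow_mul, ih, hfixq]
  -- generator of the unit group
  obtain ⟨g, hg⟩ := IsCyclic.exists_generator (α := Fqmˣ)
  have horder : orderOf g = q ^ m - 1 := by
    rw [orderOf_eq_card_of_forall_mem_zpowers hg, Nat.card_units,
      Nat.card_eq_fintype_card, hcard]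
  -- minimal polynomial
  set P := minpoly Fq (g : Fqm) with hPdef
  have hint : IsIntegral Fq (g : Fqm) := IsIntegral.of_finite Fq _
  have hP0 : P ≠ 0 := minpoly.ne_zero hint
  have hPdeg : P.natDegree ≤ m := by rw [← hrank]; exact minpoly.natDegree_le _
  set Q := P.map (algebraMap Fq Fqm) with hQdef
  have hQ0 : Q ≠ 0 := Polynomial.map_ne_zero hP0
  have hmem : ∀ x : Fqm, aeval x P = 0 → x ∈ Q.roots.toFinset := by
    intro x hx
    rw [Multiset.mem_toFinset, mem_roots hQ0]
    rwa [IsRoot.def, hQdef, eval_map, ← aeval_def]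
  -- homs fixing Fq commute with aeval of P
  have haevalhom : ∀ (h : Fqm →+* Fqm), (∀ c : Fq, h (algebraMap Fq Fqm c)
      = algebraMap Fq Fqm c) → ∀ x : Fqm, h (aeval x P) = aeval (h x) P := by
    intro h hh x
    rw [aeval_def, aeval_def, hom_eval₂]
    congr 1
    ext c
    exact hh c
  have hFfix : ∀ c : Fq, (iterateFrobenius Fqm p e) (algebraMap Fq Fqm c)
      = algebraMap Fq Fqm c := by
    intro c
    rw [hFapp, ← map_pow, hfixq]
  -- the conjugates are roots
  have hconj : ∀ j : ℕ, aeval ((g : Fqm) ^ q ^ j) P = 0 := by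
    intro j
    induction j with
    | zero => rw [pow_zero, pow_one]; exact minpoly.aeval Fq (g : Fqm)
    | succ j ih =>
      have := haevalhom _ hFfix ((g : Fqm) ^ q ^ j)
      rw [ih, map_zero, hFapp, ← pow_mul, ← pow_succ] at this
      exact this.symm
  -- the conjugates are pairwise distinct
  have hinj : ∀ i ∈ Finset.range m, ∀ j ∈ Finset.range m,
      (g : Fqm) ^ q ^ i = (g : Fqm) ^ q ^ j → i = j := by
    have key : ∀ i j : ℕ, i < j → j < m → (g : Fqm) ^ q ^ i ≠ (g : Fqm) ^ q ^ j := by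
      intro i j hij hjm hEq
      have hu : g ^ q ^ i = g ^ q ^ j := Units.ext (by push_cast; exact hEq)
      rw [pow_eq_pow_iff_modEq, horder] at hu
      have hle : q ^ i < q ^ j := Nat.pow_lt_pow_right hq1 hij
      have hdvd : q ^ m - 1 ∣ q ^ j - q ^ i := (Nat.modEq_iff_dvd' hle.le).mp hu
      have hlt : q ^ j < q ^ m := Nat.pow_lt_pow_right hq1 hjm
      have hpos : 0 < q ^ j - q ^ i := by omega
      have := Nat.le_of_dvd hpos hdvd
      have hqi : 1 ≤ q ^ i := Nat.one_le_pow _ _ (by omega)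
      omega
    intro i hi j hj hEq
    simp only [Finset.mem_range] at hi hj
    rcases lt_trichotomy i j with h | h | h
    · exact absurd hEq (key i j h hj)
    · exact h
    · exact absurd hEq.symm (key j i h hi)
  set s : Finset Fqm := (Finset.range m).image (fun j => (g : Fqm) ^ q ^ j) with hs
  have hscard : s.card = m := by
    rw [hs, Finset.card_image_of_injOn hinj, Finset.card_range]
  have hsub : s ⊆ Q.roots.toFinset := by
    intro x hx
    rw [hs, Finset.mem_image] at hx
    obtain ⟨j, _, rfl⟩ := hx
    exact hmem _ (hconj j)
  have hrootsle : Q.roots.toFinset.card ≤ m := by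
    calc Q.roots.toFinset.card ≤ Multiset.card Q.roots := Q.roots.toFinset_card_le
    _ ≤ Q.natDegree := Q.card_roots'
    _ = P.natDegree := natDegree_map _
    _ ≤ m := hPdeg
  -- f g is a root, hence a conjugate
  have hfg : f (g : Fqm) ∈ s := by
    by_contra hnot
    have hfgroot : f (g : Fqm) ∈ Q.roots.toFinset := by
      apply hmem
      have := haevalhom f hf (g : Fqm)
      rw [minpoly.aeval, map_zero] at this
      exact this.symm
    have : (insert (f (g : Fqm)) s).card ≤ Q.roots.toFinset.card :=
      Finset.card_le_card (Finset.insert_subset hfgroot hsub)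
    rw [Finset.card_insert_of_notMem hnot, hscard] at this
    omega
  rw [hs, Finset.mem_image] at hfg
  obtain ⟨j, hjm, hfgj⟩ := hfg
  rw [Finset.mem_range] at hjm
  refine ⟨j, by omega, ?_⟩
  intro x
  rcases eq_or_ne x 0 with rfl | hx
  · rw [map_zero, zero_pow (by positivity)]
  · obtain ⟨t, ht⟩ := mem_powers_iff_mem_zpowers.mpr (hg (Units.mk0 x hx))
    have ht' : g ^ t = Units.mk0 x hx := ht
    have hxt : (g : Fqm) ^ t = x := by
      rw [← Units.val_pow_eq_pow_val, ht', Units.val_mk0]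
    rw [← hxt, map_pow, ← hfgj, pow_right_comm]



/-- A transformation is fully linear over `𝔽_{q^m}` if and only if it has the
form `μ ↦ β μ^{q^j}` for some `β ∈ 𝔽_{q^m}^*` and `0 ≤ j ≤ m - 1`, i.e. it is a
composition of a Frobenius power and a nonzero scalar multiplication. -/
theorem fullyLinear_iff_frobenius_scalar
    (q m : ℕ) (hm : 0 < m) (Fq Fqm : Type) [Field Fq] [Fintype Fq] [Field Fqm]
    [Algebra Fq Fqm] (hq : Fintype.card Fq = q)
    (hrank : Module.finrank Fq Fqm = m) (φ : Fqm ≃ₗ[Fq] Fqm) :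
    FullyLinear Fq Fqm φ ↔
      ∃ (β : Fqm) (j : ℕ), β ≠ 0 ∧ j ≤ m - 1 ∧ ∀ μ : Fqm, φ μ = β * μ ^ q ^ j := by
  haveI : Module.Finite Fq Fqm :=
    Module.finite_of_finrank_pos (by rw [hrank]; exact hm)
  haveI : Finite Fqm := Module.finite_of_finite Fq
  set p := ringChar Fq with hpdef
  haveI : CharP Fq p := ringChar.charP Fq
  haveI : CharP Fqm p := charP_of_injective_algebraMap (algebraMap Fq Fqm).injective p
  obtain ⟨e, hpprime, hqe⟩ := FiniteField.card Fq p
  rw [hq] at hqe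
  haveI : Fact p.Prime := ⟨hpprime⟩
  constructor
  · intro hFL
    set β := φ 1 with hβdef
    have hβ : β ≠ 0 := by
      intro h
      have := φ.injective (a₁ := 1) (a₂ := 0) (by rw [map_zero, ← hβdef, h])
      exact one_ne_zero this
    have key : ∀ lam mu : Fqm, φ (φ.symm (lam * β) * mu) = lam * φ mu := by
      intro lam mu
      obtain ⟨D, hD⟩ := hFL 2 (Submodule.span Fqm {![1, mu]})
      have hv : (fun i => φ (![1, mu] i)) ∈ (D : Set (Fin 2 → Fqm)) := by
        rw [← hD]
        exact ⟨_, Submodule.subset_span rfl, rfl⟩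
      have hsm : lam • (fun i => φ (![1, mu] i)) ∈ (D : Set (Fin 2 → Fqm)) :=
        D.smul_mem lam hv
      rw [← hD] at hsm
      obtain ⟨w, hwC, hw⟩ := hsm
      obtain ⟨a, rfl⟩ := Submodule.mem_span_singleton.mp hwC
      have h0 := congrFun hw 0
      have h1 := congrFun hw 1
      simp only [Pi.smul_apply, smul_eq_mul, Matrix.cons_val_zero, Matrix.cons_val_one,
        Matrix.head_cons, mul_one] at h0 h1
      have ha : φ.symm (lam * β) = a := by
        rw [← h0, φ.symm_apply_apply]
      rw [ha]
      exact h1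
    set σ : Fqm → Fqm := fun lam => φ.symm (lam * β) with hσdef
    have hφσ : ∀ lam, φ (σ lam) = lam * β := fun lam => φ.apply_symm_apply _
    have hσ1 : σ 1 = 1 := by
      rw [hσdef]
      simp only [one_mul, hβdef, φ.symm_apply_apply]
    have hσmul : ∀ a b : Fqm, σ (a * b) = σ a * σ b := by
      intro a b
      apply φ.injective
      calc φ (σ (a * b)) = φ (σ (a * b) * 1) := by rw [mul_one]
      _ = a * b * φ 1 := key _ _
      _ = a * (b * φ 1) := by ring
      _ = a * φ (σ b * 1) := by rw [key]
      _ = φ (σ a * (σ b * 1)) := (key _ _).symm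
      _ = φ (σ a * σ b) := by rw [mul_one]
    have hσadd : ∀ a b : Fqm, σ (a + b) = σ a + σ b := by
      intro a b
      rw [hσdef]
      simp only [add_mul, map_add]
    have hσ0 : σ 0 = 0 := by
      rw [hσdef]; simp
    let σR : Fqm →+* Fqm :=
      { toFun := σ, map_one' := hσ1, map_mul' := hσmul, map_zero' := hσ0,
        map_add' := hσadd }
    have hσbij : Function.Bijective σR :=
      Finite.injective_iff_bijective.mp σR.injective
    let E := RingEquiv.ofBijective σR hσbij
    have hσfix : ∀ c : Fq, σ (algebraMap Fq Fqm c) = algebraMap Fq Fqm c := by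
      intro c
      show φ.symm (algebraMap Fq Fqm c * β) = algebraMap Fq Fqm c
      have hh : algebraMap Fq Fqm c * β = c • β := (Algebra.smul_def c β).symm
      rw [hh, map_smul, hβdef, φ.symm_apply_apply, Algebra.algebraMap_eq_smul_one]
    have hτfix : ∀ c : Fq, E.symm (algebraMap Fq Fqm c) = algebraMap Fq Fqm c := by
      intro c
      conv_lhs => rw [← hσfix c]
      exact E.symm_apply_apply _
    obtain ⟨j, hj, hτ⟩ := ringHom_fixing_is_frobenius_pow q m hm Fq Fqm hq hrank
      (E.symm : Fqm →+* Fqm) hτfix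
    refine ⟨β, j, hβ, hj, ?_⟩
    intro mu
    have h1 : φ (σ (E.symm mu)) = E.symm mu * β := hφσ _
    have h2 : σ (E.symm mu) = mu := E.apply_symm_apply mu
    rw [h2] at h1
    have h3 : E.symm mu = mu ^ q ^ j := hτ mu
    rw [h1, h3, mul_comm]
  · rintro ⟨β, j, hβ, hj, hφ⟩
    intro n C
    let σR : Fqm →+* Fqm := iterateFrobenius Fqm p (e * j)
    have hσ : ∀ x : Fqm, σR x = x ^ q ^ j := by
      intro x
      show x ^ p ^ (e * j : ℕ) = x ^ q ^ j
      rw [hqe, ← pow_mul]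
    haveI : RingHomSurjective σR :=
      ⟨(Finite.injective_iff_bijective.mp σR.injective).2⟩
    let f : (Fin n → Fqm) →ₛₗ[σR] (Fin n → Fqm) :=
      { toFun := fun v i => β * σR (v i),
        map_add' := by
          intro v w
          funext i
          simp [mul_add],
        map_smul' := by
          intro c v
          funext i
          simp only [Pi.smul_apply, smul_eq_mul, map_mul, RingHom.id_apply]
          ring }
    refine ⟨Submodule.map f C, ?_⟩
    rw [Submodule.map_coe]
    apply Set.image_congr
    intro v _
    funext i
    show φ (v i) = β * σR (v i)
    rw [hφ, hσ]
end

section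
/- Let $m$ be prime, $\mathcal{C}\subseteq\mathbb{F}_{q^m}^n$ a linear code with systematic generator matrix $G=[I_k|A]$, and suppose some entry of $A$ lies in $\mathbb{F}_{q^m}\setminus\mathbb{F}_q$. If an $\mathbb{F}_q$-linear automorphism $\varphi$ of $\mathbb{F}_{q^m}$ satisfies that $\varphi(\mathcal{C})$ is $\mathbb{F}_{q^m}$-linear, then $\varphi$ is fully linear over $\mathbb{F}_{q^m}$. -/
/-!
Normalise `φ` to `g = φ(1)⁻¹ φ`, so that `g 1 = 1`. Scaling the `i₀`-th row of `[I | A]`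
by `c = g s` and pulling the result back along `φ` gives a codeword whose information part
is supported at `i₀`; its `j₀`-th redundancy coordinate shows `g (s * α) = g s * g α` for
`α = A i₀ j₀`. The elements `x` with `g (s * x) = g s * g x` for all `s` form an
`𝔽_q`-subalgebra, and since `[𝔽_{q^m} : 𝔽_q]` is prime, a subalgebra containing `α ∉ 𝔽_q` is
everything. Hence `g` is a field automorphism and `φ = φ(1) · g` is semilinear, so it maps
linear codes to linear codes.
-/

open Module Matrix

theorem Subalgebra.eq_top_of_mem_of_finrank_prime {F A : Type*} [Field F] [Ring A] [IsDomain A]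
    [Algebra F A] (hp : (finrank F A).Prime) {S : Subalgebra F A} {α : A} (hαS : α ∈ S)
    (hα : α ∉ Set.range (algebraMap F A)) : S = ⊤ :=
  ((Subalgebra.isSimpleOrder_of_finrank_prime F A hp).eq_bot_or_eq_top S).resolve_left
    fun hS => hα (Algebra.mem_bot.mp (hS ▸ hαS))

namespace LinearMap

variable {R A : Type*} [CommSemiring R] [Semiring A] [Algebra R A]

def multiplicativeSubalgebra (g : A →ₗ[R] A) (hg : g 1 = 1) : Subalgebra R A where
  carrier := {x | ∀ s, g (s * x) = g s * g x}
  mul_mem' {x y} hx hy s := by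
    change g (s * (x * y)) = g s * g (x * y)
    rw [← mul_assoc, hy, hx, hy x, mul_assoc]
  one_mem' s := by simp [hg]
  add_mem' {x y} hx hy s := by
    change g (s * (x + y)) = g s * g (x + y)
    rw [mul_add, map_add, map_add, hx s, hy s, mul_add]
  zero_mem' s := by simp
  algebraMap_mem' a s := by
    rw [← Algebra.commutes, ← Algebra.smul_def, map_smul, Algebra.algebraMap_eq_smul_one,
      map_smul, hg, mul_smul_comm, mul_one]

end LinearMap

theorem fullyLinear_of_map_mul {K L : Type} [Field K] [Field L] [Algebra K L] (φ : L ≃ₗ[K] L)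
    {σ : L → L} (hσ : Function.Surjective σ) (h : ∀ s x, φ (s * x) = σ s * φ x) :
    FullyLinear K L φ := by
  intro n C
  refine ⟨{ carrier := (fun (v : Fin n → L) i => φ (v i)) '' C
            add_mem' := ?_
            zero_mem' := ⟨0, C.zero_mem, by funext i; simp⟩
            smul_mem' := ?_ }, rfl⟩
  · rintro _ _ ⟨u, hu, rfl⟩ ⟨v, hv, rfl⟩
    exact ⟨u + v, C.add_mem hu hv, by funext i; simp⟩
  · rintro c _ ⟨v, hv, rfl⟩
    obtain ⟨d, rfl⟩ := hσ c
    exact ⟨d • v, C.smul_mem d hv, funext fun i => h d (v i)⟩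

theorem fullyLinear_of_map_mul_mul_map_one {K L : Type} [Field K] [Field L] [Algebra K L]
    (hp : (finrank K L).Prime) (φ : L ≃ₗ[K] L) {α : L} (hα : α ∉ Set.range (algebraMap K L))
    (h : ∀ s, φ (s * α) * φ 1 = φ s * φ α) : FullyLinear K L φ := by
  have hφ1 : φ 1 ≠ 0 := φ.map_ne_zero_iff.mpr one_ne_zero
  set g : L →ₗ[K] L := (φ 1)⁻¹ • φ.toLinearMap
  have hg (x : L) : g x = (φ 1)⁻¹ * φ x := rfl
  have hg1 : g 1 = 1 := inv_mul_cancel₀ hφ1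
  have hαg : α ∈ g.multiplicativeSubalgebra hg1 := fun s => by
    rw [hg, hg, hg]
    field_simp
    rw [mul_comm, h]
  have hg_mul (s x : L) : g (s * x) = g s * g x := by
    have hx : x ∈ g.multiplicativeSubalgebra hg1 := by
      rw [Subalgebra.eq_top_of_mem_of_finrank_prime hp hαg hα]; trivial
    exact hx s
  refine fullyLinear_of_map_mul φ (σ := g) (fun c => ⟨φ.symm (φ 1 * c), ?_⟩) fun s x => ?_
  · rw [hg, φ.apply_symm_apply, inv_mul_cancel_left₀ hφ1]
  · calc φ (s * x) = φ 1 * g (s * x) := by rw [hg, mul_inv_cancel_left₀ hφ1]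
      _ = g s * φ x := by rw [hg_mul, hg x, mul_left_comm, mul_inv_cancel_left₀ hφ1]

section SystematicCode

variable {L : Type*} [CommRing L] {k l : ℕ}

def systematicCode (A : Matrix (Fin k) (Fin l) L) : Submodule L (Fin (k + l) → L) :=
  Submodule.span L (Set.range fun i : Fin k =>
    Fin.append (fun j : Fin k => if j = i then (1 : L) else 0) (fun j : Fin l => A i j))

theorem exists_eq_append_vecMul_of_mem_systematicCode {A : Matrix (Fin k) (Fin l) L}
    {v : Fin (k + l) → L} (hv : v ∈ systematicCode A) : ∃ t, v = Fin.append t (t ᵥ* A) := by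
  obtain ⟨t, rfl⟩ := (Submodule.mem_span_range_iff_exists_fun L).mp hv
  refine ⟨t, funext fun p => Fin.addCases (fun j => ?_) (fun j => ?_) p⟩
  · simp [Finset.sum_apply]
  · simp [Finset.sum_apply, vecMul, dotProduct]

end SystematicCode

theorem map_mul_mul_map_one_of_image_systematicCode {K L : Type*} [Field K] [Field L]
    [Algebra K L] {k l : ℕ}
    (φ : L ≃ₗ[K] L) (A : Matrix (Fin k) (Fin l) L) (i₀ : Fin k) (j₀ : Fin l)
    (hφ : ∃ D : Submodule L (Fin (k + l) → L),
      (fun v : Fin (k + l) → L => fun i => φ (v i)) '' (systematicCode A : Set _) = D)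
    (s : L) : φ (s * A i₀ j₀) * φ 1 = φ s * φ (A i₀ j₀) := by
  obtain ⟨D, hD⟩ := hφ
  have hφ1 : φ 1 ≠ 0 := φ.map_ne_zero_iff.mpr one_ne_zero
  set r : Fin (k + l) → L := Fin.append (fun j => if j = i₀ then 1 else 0) (A i₀) with hr
  set c := φ s / φ 1
  have hrD : (fun i => φ (r i)) ∈ (D : Set (Fin (k + l) → L)) :=
    hD ▸ ⟨r, Submodule.subset_span ⟨i₀, rfl⟩, rfl⟩
  have hcr : c • (fun i => φ (r i)) ∈ (D : Set (Fin (k + l) → L)) := D.smul_mem c hrD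
  rw [← hD] at hcr
  obtain ⟨_, hw, hwr⟩ := hcr
  obtain ⟨t, rfl⟩ := exists_eq_append_vecMul_of_mem_systematicCode hw
  have hcoord (p : Fin (k + l)) : φ (Fin.append t (t ᵥ* A) p) = c * φ (r p) := congrFun hwr p
  have ht : t = Pi.single i₀ s := funext fun j => φ.injective <| by
    have hj := hcoord (Fin.castAdd l j)
    rw [hr, Fin.append_left, Fin.append_left] at hj
    rcases eq_or_ne j i₀ with rfl | hne
    · rw [hj, if_pos rfl, Pi.single_eq_same, div_mul_cancel₀ _ hφ1]
    · rw [hj, if_neg hne, Pi.single_eq_of_ne hne, map_zero, mul_zero]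
  have hα := hcoord (Fin.natAdd k j₀)
  rw [hr, Fin.append_right, Fin.append_right, ht, single_vecMul] at hα
  calc φ (s * A i₀ j₀) * φ 1 = c * φ (A i₀ j₀) * φ 1 := by rw [← hα]; rfl
    _ = φ s * φ (A i₀ j₀) := by rw [mul_right_comm, div_mul_cancel₀ _ hφ1]

theorem fullyLinear_of_image_linear_of_prime_degree_general
    (m k l : ℕ) (Fq Fqm : Type) [Field Fq] [Field Fqm]
    [Algebra Fq Fqm] (hmp : m.Prime)
    (hrank : Module.finrank Fq Fqm = m)
    (A : Matrix (Fin k) (Fin l) Fqm) (i₀ : Fin k) (j₀ : Fin l)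
    (hα : A i₀ j₀ ∉ Set.range (algebraMap Fq Fqm))
    (φ : Fqm ≃ₗ[Fq] Fqm)
    (hφ : ∃ D : Submodule Fqm (Fin (k + l) → Fqm),
      (fun v : Fin (k + l) → Fqm => fun i => φ (v i)) ''
          (Submodule.span Fqm (Set.range fun i : Fin k =>
            Fin.append (fun j : Fin k => if j = i then (1 : Fqm) else 0)
              (fun j : Fin l => A i j)) : Set (Fin (k + l) → Fqm))
        = D) :
    FullyLinear Fq Fqm φ :=
  fullyLinear_of_map_mul_mul_map_one (hrank ▸ hmp) φ hα
    (map_mul_mul_map_one_of_image_systematicCode φ A i₀ j₀ hφ)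

/-- Let `m` be prime and `𝒞` the row span of a systematic generator matrix
`G = [I_k | A]` over `𝔽_{q^m}` where some entry of `A` lies in
`𝔽_{q^m} \ 𝔽_q`.  If an `𝔽_q`-linear automorphism `φ` of `𝔽_{q^m}` maps `𝒞`
to an `𝔽_{q^m}`-linear code, then `φ` is fully linear. -/
theorem fullyLinear_of_image_linear_of_prime_degree
    (q m k l : ℕ) (Fq Fqm : Type) [Field Fq] [Fintype Fq] [Field Fqm]
    [Algebra Fq Fqm] (hq : Fintype.card Fq = q) (hmp : m.Prime)
    (hrank : Module.finrank Fq Fqm = m)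
    (A : Matrix (Fin k) (Fin l) Fqm) (i₀ : Fin k) (j₀ : Fin l)
    (hα : A i₀ j₀ ∉ Set.range (algebraMap Fq Fqm))
    (φ : Fqm ≃ₗ[Fq] Fqm)
    (hφ : ∃ D : Submodule Fqm (Fin (k + l) → Fqm),
      (fun v : Fin (k + l) → Fqm => fun i => φ (v i)) ''
          (Submodule.span Fqm (Set.range fun i : Fin k =>
            Fin.append (fun j : Fin k => if j = i then (1 : Fqm) else 0)
              (fun j : Fin l => A i j)) : Set (Fin (k + l) → Fqm))
        = D) :
    FullyLinear Fq Fqm φ :=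
  fullyLinear_of_image_linear_of_prime_degree_general m k l Fq Fqm hmp hrank A i₀ j₀ hα φ hφ
end

section
/- Let $n = 2m$ and $g\in\mathbb{F}_{q^n}$ be such that $\bm{g}=(g^{q^{n-1}},\ldots,g^{q},g)$ is a basis vector of $\mathbb{F}_{q^n}$ over $\mathbb{F}_q$. Then the rank weight of $\bm{g} + \bm{g}^{[m]}$ over $\mathbb{F}_q$ equals $m$, where $\bm{g}^{[m]}$ denotes the componentwise $q^m$-th power of $\bm{g}$. -/
lemma li_pairs {m : ℕ} {Fq V : Type} [Field Fq] [AddCommGroup V] [Module Fq V]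
    (f : Fin (2 * m) → V) (hf : LinearIndependent Fq f) :
    LinearIndependent Fq (fun a : Fin m =>
      f ⟨a.1, by omega⟩ + f ⟨a.1 + m, by omega⟩) := by
  rw [Fintype.linearIndependent_iff]
  intro c hc a
  set c' : Fin (2 * m) → Fq := fun i =>
    if h : i.1 < m then c ⟨i.1, h⟩ else c ⟨i.1 - m, by omega⟩ with hc'
  have hsum : ∑ i : Fin (2 * m), c' i • f i = 0 := by
    have : ∑ i : Fin (2 * m), c' i • f i
        = ∑ i : Fin (m + m), c' (finCongr (two_mul m).symm i) • f (finCongr (two_mul m).symm i) :=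
      (Fintype.sum_equiv (finCongr (two_mul m).symm) _ _ (fun i => rfl)).symm
    rw [this, Fin.sum_univ_add]
    have h1 : ∀ a : Fin m, c' (finCongr (two_mul m).symm (Fin.castAdd m a))
        • f (finCongr (two_mul m).symm (Fin.castAdd m a)) = c a • f ⟨a.1, by omega⟩ := by
      intro a
      have hv : (finCongr (two_mul m).symm (Fin.castAdd m a)).1 = a.1 := rfl
      simp only [hc']
      rw [dif_pos (by omega : (finCongr (two_mul m).symm (Fin.castAdd m a)).1 < m)]
      congr 1
    have h2 : ∀ a : Fin m, c' (finCongr (two_mul m).symm (Fin.natAdd m a))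
        • f (finCongr (two_mul m).symm (Fin.natAdd m a)) = c a • f ⟨a.1 + m, by omega⟩ := by
      intro a
      have hv : (finCongr (two_mul m).symm (Fin.natAdd m a)).1 = m + a.1 := rfl
      simp only [hc']
      rw [dif_neg (by omega : ¬ (finCongr (two_mul m).symm (Fin.natAdd m a)).1 < m)]
      congr 1
      · apply congrArg c; apply Fin.ext; show m + a.1 - m = a.1; omega
      · apply congrArg f; apply Fin.ext; show m + a.1 = a.1 + m; omega
    rw [Finset.sum_congr rfl (fun a _ => h1 a), Finset.sum_congr rfl (fun a _ => h2 a),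
      ← Finset.sum_add_distrib]
    simpa [smul_add] using hc
  have := (Fintype.linearIndependent_iff.mp hf) c' hsum ⟨a.1, by omega⟩
  simpa [hc', a.2] using this

/-- Let `n = 2m` and `g` a normal element of `𝔽_{q^n}` over `𝔽_q`, so that
`𝐠 = (g^{q^{n-1}}, …, g^q, g)` is a basis vector.  Then the rank weight of
`𝐠 + 𝐠^{[m]}` over `𝔽_q` equals `m`. -/
theorem rank_weight_g_add_frobenius
    (q m : ℕ) (hm : 0 < m) (Fq Fqn : Type) [Field Fq] [Fintype Fq] [Field Fqn]
    [Algebra Fq Fqn] (hq : Fintype.card Fq = q)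
    (hrank : Module.finrank Fq Fqn = 2 * m)
    (g : Fqn) (hg : LinearIndependent Fq (fun i : Fin (2 * m) => g ^ q ^ (i : ℕ))) :
    Module.finrank Fq (Submodule.span Fq (Set.range fun j : Fin (2 * m) =>
        g ^ q ^ (2 * m - 1 - (j : ℕ))
          + (g ^ q ^ (2 * m - 1 - (j : ℕ))) ^ q ^ m)) = m := by
  haveI : FiniteDimensional Fq Fqn := FiniteDimensional.of_finrank_pos (by omega)
  haveI : Finite Fqn := Module.finite_of_finite Fq
  haveI : Fintype Fqn := Fintype.ofFinite _
  have hcard : Fintype.card Fqn = q ^ (2 * m) := by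
    rw [← hq, ← hrank]; exact Module.card_eq_pow_finrank
  have hfix : g ^ q ^ (2 * m) = g := by
    rw [← hcard]; exact FiniteField.pow_card g
  -- the key pointwise formula
  have hA : ∀ a : ℕ, a < 2 * m → (g ^ q ^ a) ^ q ^ m
      = g ^ q ^ (if a < m then a + m else a - m) := by
    intro a ha
    rw [← pow_mul, ← pow_add]
    by_cases h : a < m
    · rw [if_pos h]
    · rw [if_neg h]
      have : a + m = 2 * m + (a - m) := by omega
      rw [this, pow_add, pow_mul, hfix]
  set f : Fin (2 * m) → Fqn := fun i => g ^ q ^ (i : ℕ) with hf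
  set h : Fin m → Fqn := fun a => f ⟨a.1, by omega⟩ + f ⟨a.1 + m, by omega⟩ with hh
  have hranges : (Set.range fun j : Fin (2 * m) =>
      g ^ q ^ (2 * m - 1 - (j : ℕ)) + (g ^ q ^ (2 * m - 1 - (j : ℕ))) ^ q ^ m)
      = Set.range h := by
    ext x
    constructor
    · rintro ⟨j, rfl⟩
      dsimp only
      set a : ℕ := 2 * m - 1 - (j : ℕ) with hadef
      have ha : a < 2 * m := by omega
      rw [hA a ha]
      by_cases hcase : a < m
      · exact ⟨⟨a, hcase⟩, by simp [hh, hf, if_pos hcase]⟩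
      · refine ⟨⟨a - m, by omega⟩, ?_⟩
        simp only [hh, hf, if_neg hcase]
        have : a - m + m = a := by omega
        rw [this, add_comm]
    · rintro ⟨b, rfl⟩
      refine ⟨⟨2 * m - 1 - b.1, by omega⟩, ?_⟩
      dsimp only
      have he : 2 * m - 1 - (2 * m - 1 - b.1) = b.1 := by
        have := b.2; omega
      rw [he, hA b.1 (by omega), if_pos b.2]
  rw [hranges, finrank_span_eq_card (li_pairs f hg), Fintype.card_fin]
end

section
/- Let $n=2m$, $k>m$, $g$ a normal element of $\mathbb{F}_{q^n}$ over $\mathbb{F}_q$, and $G$ the $k\times n$ Moore matrix generated by $\bm{g}=(g^{q^{n-1}},\ldots,g^q,g)$. Then the $\mathbb{F}_{q^m}$-solution space of the linear system $\bm{x}_1 G + \bm{x}_2 = \bm{0}$, with unknowns $\bm{x}_1\in\mathbb{F}_{q^m}^k$ and $\bm{x}_2\in\mathbb{F}_{q^m}^n$, has exactly $q^{m(k-m)}$ solutions. -/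
open Finset in
/-- `x ↦ x ^ q ^ s` as an `Fq`-linear map on `Fqn`, where `q = |Fq|`. -/
noncomputable def frobLM {q : ℕ} {Fq Fqn : Type} [Field Fq] [Fintype Fq] [Field Fqn]
    [Algebra Fq Fqn] (hq : Fintype.card Fq = q) (s : ℕ) : Fqn →ₗ[Fq] Fqn where
  toFun x := x ^ q ^ s
  map_add' x y := by
    obtain ⟨e, hpp, hcard⟩ := FiniteField.card Fq (ringChar Fq)
    haveI : CharP Fqn (ringChar Fq) :=
      charP_of_injective_algebraMap (algebraMap Fq Fqn).injective _
    haveI : ExpChar Fqn (ringChar Fq) := ExpChar.prime hpp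
    haveI := Fact.mk hpp
    subst hq
    rw [hcard, ← pow_mul]
    exact add_pow_char_pow ..
  map_smul' c x := by
    simp only [RingHom.id_apply, Algebra.smul_def, mul_pow, ← map_pow]
    rw [← hq, FiniteField.pow_card_pow]

@[simp] theorem frobLM_apply {q : ℕ} {Fq Fqn : Type} [Field Fq] [Fintype Fq] [Field Fqn]
    [Algebra Fq Fqn] (hq : Fintype.card Fq = q) (s : ℕ) (x : Fqn) :
    frobLM hq s x = x ^ q ^ s := rfl

/-- The "Moore matrix" of a normal element is nonsingular: a vector of
coefficients annihilating all cyclic shifts of the conjugates of `g` is zero. -/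
theorem moore_null {q N : ℕ} {Fq Fqn : Type} [Field Fq] [Fintype Fq] [Field Fqn]
    [Algebra Fq Fqn] (hq : Fintype.card Fq = q) (hN : 0 < N)
    (hrn : Module.finrank Fq Fqn = N)
    (g : Fqn) (hg : LinearIndependent Fq (fun i : Fin N => g ^ q ^ (i : ℕ)))
    (c : Fin N → Fqn)
    (hc : ∀ s : Fin N, ∑ t : Fin N, c t * g ^ q ^ ((s : ℕ) + (t : ℕ)) = 0) :
    c = 0 := by
  classical
  haveI : FiniteDimensional Fq Fqn := FiniteDimensional.of_finrank_pos (by rw [hrn]; exact hN)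
  haveI : Nonempty (Fin N) := ⟨⟨0, hN⟩⟩
  let A : Matrix (Fin N) (Fin N) Fqn := Matrix.of fun s t => g ^ q ^ ((s : ℕ) + (t : ℕ))
  have hrows : LinearIndependent Fqn (fun s : Fin N => A s) := by
    rw [Fintype.linearIndependent_iff]
    intro a ha
    have hfun : ∀ x : Fqn, ∑ s : Fin N, a s * x ^ q ^ (s : ℕ) = 0 := by
      let L : Fqn →ₗ[Fq] Fqn := ∑ s : Fin N, a s • frobLM hq (s : ℕ)
      have hLapp : ∀ x, L x = ∑ s : Fin N, a s * x ^ q ^ (s : ℕ) := by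
        intro x
        simp [L, LinearMap.sum_apply, smul_eq_mul]
      let B := basisOfLinearIndependentOfCardEqFinrank hg (by rw [Fintype.card_fin, hrn])
      have hB : ∀ i : Fin N, B i = g ^ q ^ (i : ℕ) := fun i => by
        rw [coe_basisOfLinearIndependentOfCardEqFinrank]
      have hL0 : L = 0 := by
        apply B.ext
        intro t
        rw [hB, hLapp, LinearMap.zero_apply]
        have h2 := congrFun ha t
        simp only [Finset.sum_apply, Pi.smul_apply, smul_eq_mul, Pi.zero_apply,
          Matrix.of_apply, A] at h2
        simp only [← pow_mul, ← pow_add]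
        simpa only [Nat.add_comm (t : ℕ)] using h2
      intro x
      rw [← hLapp, hL0, LinearMap.zero_apply]
    have hinj : Function.Injective
        (fun s : Fin N => (powMonoidHom (q ^ (s : ℕ)) : Fqn →* Fqn)) := by
      intro s s' h
      apply hg.injective
      simpa [powMonoidHom] using congrArg (fun f : Fqn →* Fqn => f g) h
    have hli : LinearIndependent Fqn
        (fun s : Fin N => ((powMonoidHom (q ^ (s : ℕ)) : Fqn →* Fqn) : Fqn → Fqn)) :=
      (linearIndependent_monoidHom Fqn Fqn).comp _ hinj
    refine Fintype.linearIndependent_iff.mp hli a ?_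
    funext x
    simpa [powMonoidHom] using hfun x
  have hA : IsUnit A := Matrix.linearIndependent_rows_iff_isUnit.mp hrows
  have hinjA := Matrix.mulVec_injective_iff_isUnit.mpr hA
  have h0 : A.mulVec c = A.mulVec 0 := by
    rw [Matrix.mulVec_zero]
    funext s
    have := hc s
    simpa [A, Matrix.mulVec, dotProduct, mul_comm] using this
  exact hinjA h0

/-- Elements fixed by the `|Fqm|`-power Frobenius lie in the image of `Fqm`. -/
theorem mem_range_of_pow_card_eq {Q : ℕ} (hQ : 1 < Q) {Fqm Fqn : Type} [Field Fqm]
    [Field Fqn] [Fintype Fqm] [Algebra Fqm Fqn] (hcard : Fintype.card Fqm = Q)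
    (z : Fqn) (hz : z ^ Q = z) : z ∈ Set.range (algebraMap Fqm Fqn) := by
  classical
  let P : Polynomial Fqn := Polynomial.X ^ Q - Polynomial.X
  have hP0 : P ≠ 0 := by
    intro h
    have hco : P.coeff Q = 1 := by
      have h1 : ¬ (1 : ℕ) = Q := by omega
      have h2 : ¬ Q = 1 := by omega
      simp [P, Polynomial.coeff_X_pow, Polynomial.coeff_X, h1, h2]
    rw [h] at hco
    simp at hco
  have hroot : ∀ w : Fqn, w ^ Q = w → w ∈ P.roots.toFinset := by
    intro w hw
    rw [Multiset.mem_toFinset, Polynomial.mem_roots hP0]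
    simp [Polynomial.IsRoot, P, hw]
  let img : Finset Fqn := Finset.univ.image (algebraMap Fqm Fqn)
  have himg_card : img.card = Q := by
    rw [Finset.card_image_of_injective _ (algebraMap Fqm Fqn).injective,
      Finset.card_univ, hcard]
  have hsub : img ⊆ P.roots.toFinset := by
    intro x hx
    simp only [img, Finset.mem_image] at hx
    obtain ⟨w, _, rfl⟩ := hx
    exact hroot _ (by rw [← map_pow, ← hcard, FiniteField.pow_card])
  have hdeg : P.natDegree ≤ Q := by
    refine le_trans (Polynomial.natDegree_sub_le _ _) ?_
    simp [Polynomial.natDegree_X_pow, Polynomial.natDegree_X]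
    omega
  have hcard_le : P.roots.toFinset.card ≤ Q :=
    le_trans (Multiset.toFinset_card_le _) (le_trans (Polynomial.card_roots' P) hdeg)
  have heq : img = P.roots.toFinset :=
    Finset.eq_of_subset_of_card_le hsub (by omega)
  have hzmem : z ∈ img := by rw [heq]; exact hroot z hz
  simp only [img, Finset.mem_image] at hzmem
  obtain ⟨w, _, hw⟩ := hzmem
  exact ⟨w, hw⟩

set_option maxHeartbeats 2000000 in
/-- Let `n = 2m`, `m < k ≤ n`, `g` a normal element of `𝔽_{q^n}` over `𝔽_q`, and
`G` the `k × n` Moore matrix generated by `𝐠 = (g^{q^{n-1}}, …, g^q, g)`.  Then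
the linear system `x₁ G + x₂ = 0`, with unknowns `x₁ ∈ 𝔽_{q^m}^k` and
`x₂ ∈ 𝔽_{q^m}^n`, has exactly `q^{m(k-m)}` solutions over the subfield
`𝔽_{q^m}`. -/
theorem card_solutions_system
    (q m k : ℕ) (hm : 0 < m) (hmk : m < k) (hkn : k ≤ 2 * m)
    (Fq Fqm Fqn : Type) [Field Fq] [Fintype Fq] [Field Fqm] [Field Fqn]
    [Algebra Fq Fqm] [Algebra Fqm Fqn] [Algebra Fq Fqn] [IsScalarTower Fq Fqm Fqn]
    (hq : Fintype.card Fq = q) (hrm : Module.finrank Fq Fqm = m)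
    (hrn : Module.finrank Fq Fqn = 2 * m)
    (g : Fqn) (hg : LinearIndependent Fq (fun i : Fin (2 * m) => g ^ q ^ (i : ℕ))) :
    Nat.card {p : (Fin k → Fqm) × (Fin (2 * m) → Fqm) //
        ∀ j : Fin (2 * m),
          (∑ i : Fin k, algebraMap Fqm Fqn (p.1 i)
              * (g ^ q ^ (2 * m - 1 - (j : ℕ))) ^ q ^ (i : ℕ))
            + algebraMap Fqm Fqn (p.2 j) = 0}
      = q ^ (m * (k - m)) := by
  classical
  have hq2 : 1 < q := hq ▸ Fintype.one_lt_card
  set Φ := algebraMap Fqm Fqn with hΦdef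
  have hΦinj : Function.Injective Φ := (algebraMap Fqm Fqn).injective
  haveI : FiniteDimensional Fq Fqn := FiniteDimensional.of_finrank_pos (by rw [hrn]; omega)
  haveI : FiniteDimensional Fq Fqm := FiniteDimensional.of_finrank_pos (by rw [hrm]; omega)
  haveI : Fintype Fqn := Module.fintypeOfFintype (Module.finBasis Fq Fqn)
  haveI : Fintype Fqm := Module.fintypeOfFintype (Module.finBasis Fq Fqm)
  have hcardm : Fintype.card Fqm = q ^ m := by
    rw [Module.card_fintype (Module.finBasis Fq Fqm), hq, Fintype.card_fin, hrm]
  have hcardn : Fintype.card Fqn = q ^ (2 * m) := by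
    rw [Module.card_fintype (Module.finBasis Fq Fqn), hq, Fintype.card_fin, hrn]
  -- cyclicity of conjugates
  have hpowqn : ∀ (x : Fqn) (j : ℕ), x ^ (q ^ (2 * m)) ^ j = x := by
    intro x j
    rw [← hcardn]
    exact FiniteField.pow_card_pow _ _
  have hcyc : ∀ t : ℕ, g ^ q ^ t = g ^ q ^ (t % (2 * m)) := by
    intro t
    conv_lhs => rw [← Nat.mod_add_div t (2 * m)]
    rw [pow_add, pow_mul, pow_mul, hpowqn]
  have hmodeq : ∀ a b : ℕ, a % (2 * m) = b % (2 * m) → g ^ q ^ a = g ^ q ^ b := by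
    intro a b hab
    rw [hcyc a, hcyc b, hab]
  have hml : ∀ a b : ℕ, (a % (2 * m) + b) % (2 * m) = (a + b) % (2 * m) :=
    fun a b => Nat.ModEq.add_right b (Nat.mod_modEq a (2 * m))
  have hmr : ∀ a b : ℕ, (a + b % (2 * m)) % (2 * m) = (a + b) % (2 * m) :=
    fun a b => Nat.ModEq.add_left a (Nat.mod_modEq b (2 * m))
  have hfrobΦ : ∀ w : Fqm, Φ w ^ q ^ m = Φ w := by
    intro w
    rw [hΦdef, ← map_pow, ← hcardm, FiniteField.pow_card]
  -- the partial sums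
  set y : (Fin k → Fqm) → ℕ → Fqn :=
    fun x s => ∑ i : Fin k, Φ (x i) * g ^ q ^ (s + (i : ℕ)) with hydef
  have hconv : ∀ (x : Fin k → Fqm) (j : Fin (2 * m)),
      (∑ i : Fin k, Φ (x i) * (g ^ q ^ (2 * m - 1 - (j : ℕ))) ^ q ^ (i : ℕ))
        = y x (2 * m - 1 - (j : ℕ)) := by
    intro x j
    refine Finset.sum_congr rfl fun i _ => ?_
    rw [← pow_mul, ← pow_add]
  have hymod : ∀ x s, y x s = y x (s % (2 * m)) := by
    intro x s
    refine Finset.sum_congr rfl fun i _ => ?_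
    rw [hmodeq (s + (i : ℕ)) (s % (2 * m) + (i : ℕ)) (hml s (i : ℕ)).symm]
  have hfrob_y : ∀ x s, (y x s) ^ q ^ m = y x (s + m) := by
    intro x s
    have hmap := map_sum (frobLM hq m)
      (fun i : Fin k => Φ (x i) * g ^ q ^ (s + (i : ℕ))) Finset.univ
    simp only [frobLM_apply] at hmap
    rw [hydef]
    simp only []
    rw [hmap]
    refine Finset.sum_congr rfl fun i _ => ?_
    rw [mul_pow, hfrobΦ, ← pow_mul, ← pow_add]
    have : s + (i : ℕ) + m = s + m + (i : ℕ) := by omega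
    rw [this]
  haveI : NeZero (2 * m) := ⟨by omega⟩
  set X : (Fin k → Fqm) → ℕ → Fqn :=
    fun x u => if h : u < k then Φ (x ⟨u, h⟩) else 0 with hXdef
  have hyX : ∀ x s, y x s = ∑ t ∈ Finset.range (2 * m), X x t * g ^ q ^ (s + t) := by
    intro x s
    have h1 : y x s = ∑ t ∈ Finset.range k, X x t * g ^ q ^ (s + t) := by
      rw [← Fin.sum_univ_eq_sum_range (fun u => X x u * g ^ q ^ (s + u)) k]
      refine Finset.sum_congr rfl fun i _ => ?_
      simp only [hXdef]
      rw [dif_pos i.isLt]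
    rw [h1]
    refine Finset.sum_subset (Finset.range_subset_range.mpr hkn) fun t ht htk => ?_
    have h2 : ¬ t < k := by simpa using htk
    simp [hXdef, h2]
  -- key lemma: structure of solutions
  have keyA : ∀ x : Fin k → Fqm,
      (∀ s : ℕ, s < 2 * m → y x s ∈ Set.range Φ) →
      ∀ t : ℕ, t < 2 * m → X x ((t + m) % (2 * m)) = X x t := by
    intro x hx
    have hy_per : ∀ s : ℕ, y x (s + m) = y x s := by
      intro s
      obtain ⟨w, hw⟩ := hx (s % (2 * m)) (Nat.mod_lt _ (by omega))
      have h1 : y x (s % (2 * m)) ^ q ^ m = y x (s % (2 * m)) := by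
        rw [← hw, hfrobΦ]
      calc y x (s + m) = y x (s % (2 * m) + m) := by
            rw [hymod x (s + m), hymod x (s % (2 * m) + m), hml]
        _ = y x (s % (2 * m)) ^ q ^ m := (hfrob_y x _).symm
        _ = y x (s % (2 * m)) := h1
        _ = y x s := (hymod x s).symm
    set c : Fin (2 * m) → Fqn :=
      fun t => X x (((t : ℕ) + m) % (2 * m)) - X x (t : ℕ) with hcdef
    have hc : ∀ s : Fin (2 * m), ∑ t : Fin (2 * m), c t * g ^ q ^ ((s : ℕ) + (t : ℕ)) = 0 := by
      intro s
      have hsplit : ∑ t : Fin (2 * m), c t * g ^ q ^ ((s : ℕ) + (t : ℕ))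
          = (∑ t : Fin (2 * m), X x (((t : ℕ) + m) % (2 * m)) * g ^ q ^ ((s : ℕ) + (t : ℕ)))
            - ∑ t : Fin (2 * m), X x (t : ℕ) * g ^ q ^ ((s : ℕ) + (t : ℕ)) := by
        rw [← Finset.sum_sub_distrib]
        exact Finset.sum_congr rfl fun t _ => by rw [hcdef]; ring
      rw [hsplit]
      have h2 : ∑ t : Fin (2 * m), X x (t : ℕ) * g ^ q ^ ((s : ℕ) + (t : ℕ)) = y x (s : ℕ) := by
        rw [hyX]
        exact Fin.sum_univ_eq_sum_range (fun u => X x u * g ^ q ^ ((s : ℕ) + u)) (2 * m)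
      have h3 : ∑ t : Fin (2 * m), X x (((t : ℕ) + m) % (2 * m)) * g ^ q ^ ((s : ℕ) + (t : ℕ))
          = y x ((s : ℕ) + m) := by
        let e : Fin (2 * m) ≃ Fin (2 * m) :=
          Equiv.addRight (⟨m % (2 * m), Nat.mod_lt _ (by omega)⟩ : Fin (2 * m))
        have he : ∀ t : Fin (2 * m), ((e t) : ℕ) = ((t : ℕ) + m) % (2 * m) := by
          intro t
          have h4 : ((e t) : ℕ) = ((t : ℕ) + m % (2 * m)) % (2 * m) := by
            simp [e, Equiv.coe_addRight, Fin.add_def]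
          rw [h4, hmr]
        calc ∑ t : Fin (2 * m), X x (((t : ℕ) + m) % (2 * m)) * g ^ q ^ ((s : ℕ) + (t : ℕ))
            = ∑ t : Fin (2 * m), X x ((e t : ℕ)) * g ^ q ^ ((s : ℕ) + m + ((e t : ℕ))) := by
              refine Finset.sum_congr rfl fun t _ => ?_
              rw [he t]
              congr 1
              apply hmodeq
              rw [hmr ((s : ℕ) + m) ((t : ℕ) + m)]
              have h5 : (s : ℕ) + m + ((t : ℕ) + m) = (s : ℕ) + (t : ℕ) + 2 * m := by omega
              rw [h5, Nat.add_mod_right]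
          _ = ∑ u : Fin (2 * m), X x (u : ℕ) * g ^ q ^ ((s : ℕ) + m + (u : ℕ)) :=
              Equiv.sum_comp e (fun u : Fin (2 * m) =>
                X x (u : ℕ) * g ^ q ^ ((s : ℕ) + m + (u : ℕ)))
          _ = y x ((s : ℕ) + m) := by
              rw [hyX]
              exact Fin.sum_univ_eq_sum_range
                (fun u => X x u * g ^ q ^ ((s : ℕ) + m + u)) (2 * m)
      rw [h2, h3, hy_per, sub_self]
    have hc0 := moore_null hq (by omega) hrn g hg c hc
    intro t ht
    have h6 := congrFun hc0 ⟨t, ht⟩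
    simp only [hcdef, Pi.zero_apply] at h6
    have := sub_eq_zero.mp h6
    simpa using this
  -- range membership for solutions
  have hsolrange : ∀ p : (Fin k → Fqm) × (Fin (2 * m) → Fqm),
      (∀ j : Fin (2 * m),
        (∑ i : Fin k, Φ (p.1 i) * (g ^ q ^ (2 * m - 1 - (j : ℕ))) ^ q ^ (i : ℕ))
          + Φ (p.2 j) = 0) →
      ∀ s : ℕ, s < 2 * m → y p.1 s ∈ Set.range Φ := by
    intro p hp s hs
    have hj := hp ⟨2 * m - 1 - s, by omega⟩
    rw [hconv] at hj
    have hss : 2 * m - 1 - (2 * m - 1 - s) = s := by omega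
    simp only [hss] at hj
    refine ⟨-(p.2 ⟨2 * m - 1 - s, by omega⟩), ?_⟩
    rw [map_neg]
    exact (eq_neg_of_add_eq_zero_left hj).symm
  -- trace elements
  have htr : ∀ u : ℕ, (g ^ q ^ u + g ^ q ^ (u + m)) ∈ Set.range Φ := by
    intro u
    apply mem_range_of_pow_card_eq (Nat.one_lt_pow (by omega) hq2) hcardm
    have hadd := (frobLM hq m).map_add (g ^ q ^ u) (g ^ q ^ (u + m))
    simp only [frobLM_apply] at hadd
    rw [hadd, ← pow_mul, ← pow_add, ← pow_mul, ← pow_add]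
    have h7 : g ^ q ^ (u + m + m) = g ^ q ^ u := by
      apply hmodeq
      have h8 : u + m + m = u + 2 * m := by omega
      rw [h8, Nat.add_mod_right]
    rw [h7]
    exact add_comm _ _
  choose τ hτ using htr
  -- the candidate solutions
  set xx : (Fin (k - m) → Fqm) → Fin k → Fqm := fun v i =>
    if h : (i : ℕ) < k - m then v ⟨(i : ℕ), h⟩
    else if h2 : (i : ℕ) < m then 0
    else v ⟨(i : ℕ) - m, by have := i.isLt; omega⟩ with hxxdef
  have hyv : ∀ (v : Fin (k - m) → Fqm) (s : ℕ),
      y (xx v) s = ∑ i : Fin (k - m),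
        Φ (v i) * (g ^ q ^ (s + (i : ℕ)) + g ^ q ^ (s + (i : ℕ) + m)) := by
    intro v s
    have h1 : y (xx v) s = ∑ t ∈ Finset.range k, X (xx v) t * g ^ q ^ (s + t) := by
      rw [← Fin.sum_univ_eq_sum_range (fun u => X (xx v) u * g ^ q ^ (s + u)) k]
      refine Finset.sum_congr rfl fun i _ => ?_
      simp only [hXdef]
      rw [dif_pos i.isLt]
    rw [h1, Finset.range_eq_Ico,
      ← Finset.sum_Ico_consecutive (fun t => X (xx v) t * g ^ q ^ (s + t))
        (Nat.zero_le m) (le_of_lt hmk),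
      ← Finset.sum_Ico_consecutive (fun t => X (xx v) t * g ^ q ^ (s + t))
        (Nat.zero_le (k - m)) (by omega : k - m ≤ m)]
    have hmid : ∑ t ∈ Finset.Ico (k - m) m, X (xx v) t * g ^ q ^ (s + t) = 0 := by
      refine Finset.sum_eq_zero fun t ht => ?_
      rw [Finset.mem_Ico] at ht
      have htk : t < k := by omega
      simp only [hXdef]
      rw [dif_pos htk]
      simp only [hxxdef]
      rw [dif_neg (by omega : ¬ t < k - m), dif_pos (ht.2 : t < m)]
      simp
    rw [hmid, add_zero]
    have hfirst : ∑ t ∈ Finset.Ico 0 (k - m), X (xx v) t * g ^ q ^ (s + t)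
        = ∑ i : Fin (k - m), Φ (v i) * g ^ q ^ (s + (i : ℕ)) := by
      rw [← Finset.range_eq_Ico,
        ← Fin.sum_univ_eq_sum_range (fun u => X (xx v) u * g ^ q ^ (s + u)) (k - m)]
      refine Finset.sum_congr rfl fun i _ => ?_
      have hik : (i : ℕ) < k := by have := i.isLt; omega
      simp only [hXdef]
      rw [dif_pos hik]
      simp only [hxxdef]
      rw [dif_pos (i.isLt : (i : ℕ) < k - m)]
    have hlast : ∑ t ∈ Finset.Ico m k, X (xx v) t * g ^ q ^ (s + t)
        = ∑ i : Fin (k - m), Φ (v i) * g ^ q ^ (s + (i : ℕ) + m) := by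
      rw [Finset.sum_Ico_eq_sum_range]
      rw [← Fin.sum_univ_eq_sum_range
        (fun u => X (xx v) (m + u) * g ^ q ^ (s + (m + u))) (k - m)]
      refine Finset.sum_congr rfl fun i _ => ?_
      have hik : m + (i : ℕ) < k := by have := i.isLt; omega
      simp only [hXdef]
      rw [dif_pos hik]
      simp only [hxxdef]
      rw [dif_neg (by omega : ¬ m + (i : ℕ) < k - m),
        dif_neg (by omega : ¬ m + (i : ℕ) < m)]
      have h10 : s + (m + (i : ℕ)) = s + (i : ℕ) + m := by omega
      have h11 : v ⟨m + (i : ℕ) - m, by have := i.isLt; omega⟩ = v i := by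
        congr 1
        exact Fin.ext (show m + (i : ℕ) - m = (i : ℕ) by omega)
      rw [h10, h11]
    rw [hfirst, hlast, ← Finset.sum_add_distrib]
    exact Finset.sum_congr rfl fun i _ => by ring
  have hyΦ : ∀ v s, y (xx v) s = Φ (∑ i : Fin (k - m), v i * τ (s + (i : ℕ))) := by
    intro v s
    rw [hyv, map_sum]
    exact Finset.sum_congr rfl fun i _ => by rw [map_mul, hτ]
  -- the forward map
  set F : {p : (Fin k → Fqm) × (Fin (2 * m) → Fqm) //
      ∀ j : Fin (2 * m),
        (∑ i : Fin k, Φ (p.1 i) * (g ^ q ^ (2 * m - 1 - (j : ℕ))) ^ q ^ (i : ℕ))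
          + Φ (p.2 j) = 0} → (Fin (k - m) → Fqm) :=
    fun p => fun i => p.1.1 ⟨(i : ℕ), by have := i.isLt; omega⟩ with hFdef
  have hx_eq_xx : ∀ p (hp : ∀ j : Fin (2 * m),
        (∑ i : Fin k, Φ (p.1 i) * (g ^ q ^ (2 * m - 1 - (j : ℕ))) ^ q ^ (i : ℕ))
          + Φ (p.2 j) = 0),
      p.1 = xx (F ⟨p, hp⟩) := by
    intro p hp
    have hX := keyA p.1 (hsolrange p hp)
    funext i
    simp only [hxxdef, hFdef]
    by_cases h1 : (i : ℕ) < k - m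
    · rw [dif_pos h1]
    · rw [dif_neg h1]
      by_cases h2 : (i : ℕ) < m
      · rw [dif_pos h2]
        have ht := hX (i : ℕ) (by omega)
        rw [Nat.mod_eq_of_lt (by omega)] at ht
        simp only [hXdef] at ht
        rw [dif_neg (by omega : ¬ (i : ℕ) + m < k), dif_pos i.isLt] at ht
        apply hΦinj
        rw [map_zero]
        exact ht.symm
      · rw [dif_neg h2]
        have hik := i.isLt
        have ht := hX ((i : ℕ) - m) (by omega)
        have h6 : (i : ℕ) - m + m = (i : ℕ) := by omega
        rw [h6, Nat.mod_eq_of_lt (by omega)] at ht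
        simp only [hXdef] at ht
        rw [dif_pos i.isLt, dif_pos (by omega : (i : ℕ) - m < k)] at ht
        have h7 : p.1 ⟨(i : ℕ), i.isLt⟩ = p.1 ⟨(i : ℕ) - m, by omega⟩ := hΦinj ht
        have h8 : p.1 i = p.1 ⟨(i : ℕ), i.isLt⟩ := congrArg p.1 (Fin.ext rfl)
        exact h8.trans (h7.trans (congrArg p.1 (Fin.ext rfl)))
  have hFbij : Function.Bijective F := by
    constructor
    · rintro ⟨p, hp⟩ ⟨p', hp'⟩ hFe
      have hx1 : p.1 = p'.1 := by
        rw [hx_eq_xx p hp, hx_eq_xx p' hp', hFe]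
      refine Subtype.ext (Prod.ext hx1 ?_)
      funext j
      apply hΦinj
      have h1 := hp j
      have h2 := hp' j
      rw [← hx1] at h2
      have := h1.trans h2.symm
      exact add_left_cancel this
    · intro v
      have hsolv : ∀ j : Fin (2 * m),
          (∑ i : Fin k, Φ (xx v i) * (g ^ q ^ (2 * m - 1 - (j : ℕ))) ^ q ^ (i : ℕ))
            + Φ (-(∑ i : Fin (k - m), v i * τ ((2 * m - 1 - (j : ℕ)) + (i : ℕ)))) = 0 := by
        intro j
        rw [hconv, hyΦ, map_neg]
        ring
      refine ⟨⟨(xx v, fun j => -(∑ i : Fin (k - m), v i * τ ((2 * m - 1 - (j : ℕ)) + (i : ℕ)))),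
        hsolv⟩, ?_⟩
      funext i
      simp only [hFdef, hxxdef]
      rw [dif_pos (i.isLt : (i : ℕ) < k - m)]
  rw [Nat.card_eq_of_bijective F hFbij, Nat.card_eq_fintype_card, Fintype.card_fun,
    hcardm, Fintype.card_fin, ← pow_mul]
end
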